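/- Let k be a field of characteristic zero, let K be an odd positive integer, set n = 4K, and let X = Z_n be the dihedral quandle (x▷y = 2y − x in Z_n). Then every derivation D of the quandle algebra k[X], with matrix coefficients defined by D(e_t) = Σ_x c_t^x e_x, satisfies c_{t+K}^{x+K} = c_{t+1}^{x+1} for all t, x ∈ Z_n; equivalently, c_t^x = c_{t+K−1}^{x+K−1} for all t, x ∈ Z_n. -/

import Mathlib

/-- The quandle algebra multiplication on `X →₀ k`, as a bilinear map,
determined on basis vectors by `e_x · e_y = e_{op x y}`. -/
noncomputable def qmul {k X : Type*} [Field k] (op : X → X → X) :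
    (X →₀ k) →ₗ[k] (X →₀ k) →ₗ[k] (X →₀ k) :=
  Finsupp.lsum k fun x =>
    LinearMap.toSpanSingleton k ((X →₀ k) →ₗ[k] (X →₀ k))
      (Finsupp.lsum k fun y =>
        LinearMap.toSpanSingleton k (X →₀ k) (Finsupp.single (op x y) (1 : k)))

/-- A derivation of the quandle algebra: a linear map satisfying the Leibniz rule. -/
def IsDerivation {k X : Type*} [Field k] (op : X → X → X)
    (D : (X →₀ k) →ₗ[k] (X →₀ k)) : Prop :=
  ∀ a b : X →₀ k, D (qmul op a b) = qmul op (D a) b + qmul op a (D b)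

/-! Write `c_a^b` for the coefficient of `e_b` in `D e_a`, for the quandle `x ▷ y = 2y - x` on a
finite abelian group `A`. Evaluating the Leibniz rule on `e_s · e_t` shows that, for each `t`, the
difference `c_a^b - c_{2t-a}^{2t-b}` depends only on `b - a`. Composing the reflections in `0` and
in `g` translates by `2g`, so `c_a^b - c_{a+2g}^{b+2g}` depends only on `b - a` as well. Summing it
along the orbit of `(a, b)` under this translation telescopes to zero, so `|A|` times it vanishes,
hence it vanishes in characteristic zero. For `A = ℤ/4K` with `K = 2j + 1` take `g = j`, so that
`2g = K - 1`. -/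

open Finsupp

section QuandleAlgebra

variable {k X : Type*} [Field k] (op : X → X → X)

lemma qmul_single_single (x y : X) (a b : k) :
    qmul op (single x a) (single y b) = single (op x y) (a * b) := by
  simp [qmul, smul_single]

lemma qmul_single_one_left (s : X) (b : X →₀ k) :
    qmul op (single s 1) b = mapDomain (op s) b := by
  induction b using Finsupp.induction_linear with
  | zero => simp
  | add f g hf hg => rw [map_add, hf, hg, mapDomain_add]
  | single y a => rw [qmul_single_single, one_mul, mapDomain_single]

lemma qmul_single_one_right (t : X) (a : X →₀ k) :
    qmul op a (single t 1) = mapDomain (op · t) a := by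
  induction a using Finsupp.induction_linear with
  | zero => simp
  | add f g hf hg => rw [map_add, LinearMap.add_apply, hf, hg, mapDomain_add]
  | single x a => rw [qmul_single_single, mul_one, mapDomain_single]

variable {op} {D : (X →₀ k) →ₗ[k] (X →₀ k)}

lemma IsDerivation.apply_single_op (hD : IsDerivation op D) (s t : X) :
    D (single (op s t) 1) =
      mapDomain (op · t) (D (single s 1)) + mapDomain (op s) (D (single t 1)) := by
  have h := hD (single s 1) (single t 1)
  rwa [qmul_single_single, one_mul, qmul_single_one_right, qmul_single_one_left] at h

end QuandleAlgebra

lemma apply_add_eq_of_sub_apply_add_invariant {G M : Type*} [AddCommGroup G] [Finite G]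
    [AddCommGroup M] [IsAddTorsionFree M] (f : G → M) (g : G)
    (hf : ∀ x, f (x + g) - f (x + g + g) = f x - f (x + g)) (x : G) :
    f (x + g) = f x := by
  have hstep : ∀ i : ℕ, f (x + i • g) - f (x + (i + 1) • g) = f x - f (x + g) := by
    intro i
    induction i with
    | zero => simp
    | succ i ih =>
      rw [← ih]
      simp only [succ_nsmul, ← add_assoc]
      exact hf _
  have hsum := Finset.sum_range_sub' (fun i : ℕ => f (x + i • g)) (Nat.card G)
  simp only [hstep, Finset.sum_const, Finset.card_range, zero_smul, add_zero,
    card_nsmul_eq_zero', sub_self] at hsum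
  have hcard : Nat.card G ≠ 0 := Nat.card_pos.ne'
  exact (sub_eq_zero.mp (nsmul_right_injective hcard (hsum.trans (nsmul_zero _).symm))).symm

section Takasaki

variable {k A : Type*} [Field k] [AddCommGroup A] {D : (A →₀ k) →ₗ[k] (A →₀ k)}

lemma IsDerivation.apply_single_two_nsmul_sub_apply
    (hD : IsDerivation (fun x y : A => 2 • y - x) D) (s t u : A) :
    D (single (2 • t - s) 1) u =
      D (single s 1) (2 • t - u) + mapDomain (2 • ·) (D (single t 1)) (u + s) := by
  have h := DFunLike.congr_fun (hD.apply_single_op s t) u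
  rwa [Finsupp.add_apply, show (fun x : A => 2 • t - x) = Equiv.subLeft (2 • t) from rfl,
    mapDomain_equiv_apply, Equiv.subLeft_symm_apply, neg_add_eq_sub,
    show (fun y : A => 2 • y - s) = Equiv.subRight s ∘ (2 • ·) from rfl, mapDomain_comp,
    mapDomain_equiv_apply, Equiv.subRight_symm_apply] at h

lemma IsDerivation.apply_single_sub_apply_single_reflect
    (hD : IsDerivation (fun x y : A => 2 • y - x) D) (t a b : A) :
    D (single a 1) b - D (single (2 • t - a) 1) (2 • t - b) =
      mapDomain (2 • ·) (D (single t 1)) (b - a + 2 • t) := by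
  have h := hD.apply_single_two_nsmul_sub_apply (2 • t - a) t b
  rw [sub_sub_cancel] at h
  rw [h, add_sub_cancel_left]
  congr 1
  abel

lemma IsDerivation.exists_sub_apply_single_add_two_nsmul
    (hD : IsDerivation (fun x y : A => 2 • y - x) D) (g : A) :
    ∃ F : A → k, ∀ a b : A,
      D (single a 1) b - D (single (a + 2 • g) 1) (b + 2 • g) = F (b - a) := by
  refine ⟨fun d => mapDomain (2 • ·) (D (single 0 1)) d +
    mapDomain (2 • ·) (D (single g 1)) (-d + 2 • g), fun a b => ?_⟩
  have h₀ := hD.apply_single_sub_apply_single_reflect 0 a b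
  have h₁ := hD.apply_single_sub_apply_single_reflect g (-a) (-b)
  simp only [smul_zero, zero_sub, add_zero, sub_neg_eq_add] at h₀ h₁
  rw [add_comm (2 • g) a, add_comm (2 • g) b] at h₁
  dsimp only
  rw [← h₀, show -(b - a) + 2 • g = -b + a + 2 • g by abel, ← h₁]
  abel

lemma IsDerivation.apply_single_add_two_nsmul [Finite A] [CharZero k]
    (hD : IsDerivation (fun x y : A => 2 • y - x) D) (g a b : A) :
    D (single (a + 2 • g) 1) (b + 2 • g) = D (single a 1) b := by
  obtain ⟨F, hF⟩ := hD.exists_sub_apply_single_add_two_nsmul g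
  refine apply_add_eq_of_sub_apply_add_invariant (fun p : A × A => D (single p.1 1) p.2)
    (2 • g, 2 • g) (fun p => ?_) (a, b)
  simp only [Prod.fst_add, Prod.snd_add, hF]
  congr 1
  abel

end Takasaki

theorem dihedral_4k_odd_derivation_shift_general {k : Type*} [Field k] [CharZero k]
    (K : ℕ) (hK : Odd K)
    (D : (ZMod (4 * K) →₀ k) →ₗ[k] (ZMod (4 * K) →₀ k))
    (hD : IsDerivation (fun x y : ZMod (4 * K) => 2 * y - x) D)
    (c : ZMod (4 * K) → ZMod (4 * K) → k)
    (hc : ∀ t u, D (Finsupp.single t 1) u = c t u) :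
    ∀ t x : ZMod (4 * K),
      c (t + (K : ZMod (4 * K))) (x + (K : ZMod (4 * K))) = c (t + 1) (x + 1) ∧
      c t x = c (t + (K : ZMod (4 * K)) - 1) (x + (K : ZMod (4 * K)) - 1) := by
  have : NeZero (4 * K) := ⟨by have := hK.pos; omega⟩
  have hD' : IsDerivation (fun x y : ZMod (4 * K) => 2 • y - x) D := by
    simpa only [two_nsmul, two_mul] using hD
  obtain ⟨j, hj⟩ := hK
  have h2j : 2 • (j : ZMod (4 * K)) = K - 1 := by
    have := congrArg (Nat.cast : ℕ → ZMod (4 * K)) hj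
    push_cast at this
    rw [this, two_nsmul, two_mul, add_sub_cancel_right]
  have hshift : ∀ a b : ZMod (4 * K), c (a + (K - 1)) (b + (K - 1)) = c a b := by
    intro a b
    rw [← hc, ← hc, ← h2j]
    exact hD'.apply_single_add_two_nsmul _ a b
  intro t x
  constructor
  · simpa only [add_add_sub_cancel] using hshift (t + 1) (x + 1)
  · simpa only [add_sub_assoc] using (hshift t x).symm

/-- For the dihedral quandle `Z_n` with `n = 4K`, `K` odd positive, over a field of
characteristic zero, the matrix coefficients of any derivation satisfy
`c_{t+K}^{x+K} = c_{t+1}^{x+1}`; equivalently `c_t^x = c_{t+K-1}^{x+K-1}`. -/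
theorem dihedral_4k_odd_derivation_shift {k : Type*} [Field k] [CharZero k]
    (K : ℕ) (hK : Odd K) (hpos : 0 < K)
    (D : (ZMod (4 * K) →₀ k) →ₗ[k] (ZMod (4 * K) →₀ k))
    (hD : IsDerivation (fun x y : ZMod (4 * K) => 2 * y - x) D)
    (c : ZMod (4 * K) → ZMod (4 * K) → k)
    (hc : ∀ t u, D (Finsupp.single t 1) u = c t u) :
    ∀ t x : ZMod (4 * K),
      c (t + (K : ZMod (4 * K))) (x + (K : ZMod (4 * K))) = c (t + 1) (x + 1) ∧
      c t x = c (t + (K : ZMod (4 * K)) - 1) (x + (K : ZMod (4 * K)) - 1) :=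
  dihedral_4k_odd_derivation_shift_general K hK D hD c hc
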